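/- Let d ≥ 1, let g : ℝ^d → ℝ be measurable with ∫_{ℝ^d} (1 + ‖y‖₂²)|g(y)| dy < ∞, ∫_{ℝ^d} g(y) dy = 0, and ∫_{ℝ^d} y_j g(y) dy = 0 for every coordinate j, and set M = ∫_{ℝ^d} ‖y‖₂² |g(y)| dy. Let f : ℝ^d → ℝ be twice continuously differentiable with H = sup_{x} ‖∇²f(x)‖_{op} < ∞. Then for every k ∈ ℤ and b ∈ ℝ^d the integral ∫_{ℝ^d} 2^{k/2} g(2^{k/d}(x − b)) f(x) dx converges absolutely and |∫_{ℝ^d} 2^{k/2} g(2^{k/d}(x − b)) f(x) dx| ≤ (1/2) · H · M · 2^{−(2k/d + k/2)}. -/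

import Mathlib

/-!
Substituting `u = 2^{k/d} (x - b)` turns the integral into
`2^{k/2 - k} ∫ g(u) f(b + 2^{-k/d} u) du`. Since the zeroth and first moments of `g` vanish, the
first-order Taylor polynomial of `f` at `b` integrates to zero against `g`, and the Taylor remainder
is at most `H/2 · 2^{-2k/d} ‖u‖²`.
-/

open MeasureTheory

section Taylor

variable {E F : Type*} [NormedAddCommGroup E] [NormedSpace ℝ E] [NormedAddCommGroup F]
  [NormedSpace ℝ F] {f : E → F} {H : ℝ}

theorem norm_fderiv_sub_fderiv_le_of_norm_iteratedFDeriv_two_le (hf : ContDiff ℝ 2 f)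
    (hH : ∀ x, ‖iteratedFDeriv ℝ 2 f x‖ ≤ H) (x y : E) :
    ‖fderiv ℝ f y - fderiv ℝ f x‖ ≤ H * ‖y - x‖ := by
  have hf' : Differentiable ℝ (fderiv ℝ f) :=
    (hf.fderiv_right (m := 1) le_rfl).differentiable one_ne_zero
  refine convex_univ.norm_image_sub_le_of_norm_fderiv_le (fun z _ => hf'.differentiableAt)
    (fun z _ => ?_) trivial trivial
  rw [← norm_iteratedFDeriv_one, norm_iteratedFDeriv_fderiv]
  exact hH z

theorem norm_sub_sub_fderiv_le_of_norm_iteratedFDeriv_two_le (hf : ContDiff ℝ 2 f)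
    (hH : ∀ x, ‖iteratedFDeriv ℝ 2 f x‖ ≤ H) (x y : E) :
    ‖f y - f x - fderiv ℝ f x (y - x)‖ ≤ H / 2 * ‖y - x‖ ^ 2 := by
  set v := y - x
  have hφ : ∀ t : ℝ, HasDerivAt (fun t : ℝ => f (x + t • v) - f x - t • fderiv ℝ f x v)
      (fderiv ℝ f (x + t • v) v - fderiv ℝ f x v) t := by
    intro t
    have hline : HasDerivAt (fun t : ℝ => x + t • v) v t := by
      simpa using ((hasDerivAt_id t).smul_const v).const_add x
    have := ((hf.differentiable two_ne_zero _).hasFDerivAt.comp_hasDerivAt t hline).sub_const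
      (f x)
    simpa using this.fun_sub ((hasDerivAt_id' t).smul_const (fderiv ℝ f x v))
  have hB : ∀ t : ℝ, HasDerivAt (fun t => H / 2 * ‖v‖ ^ 2 * t ^ 2) (H * ‖v‖ ^ 2 * t) t := by
    intro t
    exact ((hasDerivAt_pow 2 t).const_mul (H / 2 * ‖v‖ ^ 2)).congr_deriv (by push_cast; ring)
  have hbound : ∀ t ∈ Set.Ico (0 : ℝ) 1,
      ‖fderiv ℝ f (x + t • v) v - fderiv ℝ f x v‖ ≤ H * ‖v‖ ^ 2 * t := by
    rintro t ⟨ht, -⟩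
    calc ‖fderiv ℝ f (x + t • v) v - fderiv ℝ f x v‖
        ≤ ‖fderiv ℝ f (x + t • v) - fderiv ℝ f x‖ * ‖v‖ :=
          (fderiv ℝ f (x + t • v) - fderiv ℝ f x).le_opNorm v
      _ ≤ H * ‖t • v‖ * ‖v‖ := by
          gcongr
          simpa using norm_fderiv_sub_fderiv_le_of_norm_iteratedFDeriv_two_le hf hH x (x + t • v)
      _ = H * ‖v‖ ^ 2 * t := by rw [norm_smul, Real.norm_of_nonneg ht]; ring
  have := image_norm_le_of_norm_deriv_right_le_deriv_boundary
    (fun t _ => (hφ t).continuousAt.continuousWithinAt) (fun t _ => (hφ t).hasDerivWithinAt)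
    (by simp) hB hbound (Set.right_mem_Icc.2 zero_le_one)
  simpa [v] using this

end Taylor

theorem integrable_mul_of_abs_le_mul_one_add_sq {E : Type*} [NormedAddCommGroup E]
    [MeasurableSpace E] {μ : Measure E} {g h : E → ℝ}
    (hg : Integrable (fun y => (1 + ‖y‖ ^ 2) * |g y|) μ) (hgm : AEStronglyMeasurable g μ)
    (hhm : AEStronglyMeasurable h μ) {C : ℝ} (hC : ∀ y, |h y| ≤ C * (1 + ‖y‖ ^ 2)) :
    Integrable (fun y => h y * g y) μ :=
  (hg.const_mul C).mono' (hhm.mul hgm) <| ae_of_all _ fun y => by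
    rw [Real.norm_eq_abs, abs_mul, ← mul_assoc]
    exact mul_le_mul_of_nonneg_right (hC y) (abs_nonneg _)

section Moments

variable {ι : Type*} [Fintype ι] {g : EuclideanSpace ℝ ι → ℝ}

theorem mul_continuousLinearMap_eq_sum (L : EuclideanSpace ℝ ι →L[ℝ] ℝ) :
    (fun y => g y * L y) = fun y => ∑ j, L (EuclideanSpace.basisFun ι ℝ j) * (y j * g y) := by
  funext y
  conv_lhs => arg 2; rw [← (EuclideanSpace.basisFun ι ℝ).sum_repr y]
  simp only [map_sum, map_smul, smul_eq_mul, EuclideanSpace.basisFun_repr, Finset.mul_sum]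
  exact Finset.sum_congr rfl fun j _ => by ring

theorem integrable_mul_continuousLinearMap (hint : ∀ j, Integrable fun y => y j * g y)
    (L : EuclideanSpace ℝ ι →L[ℝ] ℝ) : Integrable fun y => g y * L y := by
  rw [mul_continuousLinearMap_eq_sum]
  exact integrable_finsetSum _ fun j _ => (hint j).const_mul _

theorem integral_mul_continuousLinearMap_eq_zero (hint : ∀ j, Integrable fun y => y j * g y)
    (hg1 : ∀ j, ∫ y, y j * g y = 0) (L : EuclideanSpace ℝ ι →L[ℝ] ℝ) :
    ∫ y, g y * L y = 0 := by
  rw [mul_continuousLinearMap_eq_sum, integral_finsetSum _ fun j _ => (hint j).const_mul _]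
  exact Finset.sum_eq_zero fun j _ => by rw [integral_const_mul, hg1 j, mul_zero]

theorem integrable_coord_mul (hgm : Measurable g)
    (hgint : Integrable fun y => (1 + ‖y‖ ^ 2) * |g y|) (j : ι) :
    Integrable fun y => y j * g y :=
  integrable_mul_of_abs_le_mul_one_add_sq hgint hgm.aestronglyMeasurable
    (EuclideanSpace.proj j).continuous.aestronglyMeasurable (C := 1) fun y => by
      have := PiLp.norm_apply_le y j
      rw [Real.norm_eq_abs] at this
      nlinarith [sq_nonneg (‖y‖ - 1)]

theorem integrable_and_abs_integral_mul_comp_affine_le (hgm : Measurable g)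
    (hgint : Integrable fun y => (1 + ‖y‖ ^ 2) * |g y|) (hg0 : ∫ y, g y = 0)
    (hg1 : ∀ j, ∫ y, y j * g y = 0) {f : EuclideanSpace ℝ ι → ℝ} {H : ℝ} (hf : ContDiff ℝ 2 f)
    (hH : ∀ x, ‖iteratedFDeriv ℝ 2 f x‖ ≤ H) (b : EuclideanSpace ℝ ι) (c : ℝ) :
    Integrable (fun u => g u * f (b + c • u)) ∧
      |∫ u, g u * f (b + c • u)| ≤ H / 2 * c ^ 2 * ∫ u, ‖u‖ ^ 2 * |g u| := by
  set L := fderiv ℝ f b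
  set R : EuclideanSpace ℝ ι → ℝ := fun u => f (b + c • u) - f b - L (c • u)
  have hcoord := integrable_coord_mul hgm hgint
  have hgI : Integrable g := by
    simpa using integrable_mul_of_abs_le_mul_one_add_sq hgint hgm.aestronglyMeasurable
      (h := fun _ => 1) aestronglyMeasurable_const (C := 1) fun y => by simp
  have hmom : Integrable fun u => ‖u‖ ^ 2 * |g u| :=
    hgint.mono' (by fun_prop) <| ae_of_all _ fun u => by
      rw [Real.norm_of_nonneg (by positivity)]
      gcongr
      linarith
  have hR : ∀ u, ‖g u * R u‖ ≤ H / 2 * c ^ 2 * (‖u‖ ^ 2 * |g u|) := fun u => by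
    have := norm_sub_sub_fderiv_le_of_norm_iteratedFDeriv_two_le hf hH b (b + c • u)
    rw [add_sub_cancel_left, norm_smul, Real.norm_eq_abs, Real.norm_eq_abs] at this
    rw [Real.norm_eq_abs, abs_mul]
    calc |g u| * |R u| ≤ |g u| * (H / 2 * (|c| * ‖u‖) ^ 2) := by gcongr
      _ = H / 2 * c ^ 2 * (‖u‖ ^ 2 * |g u|) := by rw [mul_pow, sq_abs]; ring
  have hRI : Integrable fun u => g u * R u :=
    (hmom.const_mul _).mono' (hgm.aestronglyMeasurable.mul
      (by have := hf.continuous; fun_prop : Continuous R).aestronglyMeasurable) (ae_of_all _ hR)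
  have hLI := integrable_mul_continuousLinearMap hcoord L
  have hsplit : (fun u => g u * f (b + c • u))
      = fun u => f b * g u + c * (g u * L u) + g u * R u := by
    funext u
    simp only [R, map_smul, smul_eq_mul]
    ring
  rw [hsplit]
  refine ⟨((hgI.const_mul _).fun_add (hLI.const_mul _)).fun_add hRI, ?_⟩
  rw [integral_add ((hgI.const_mul _).fun_add (hLI.const_mul _)) hRI,
    integral_add (hgI.const_mul _) (hLI.const_mul _), integral_const_mul, integral_const_mul, hg0,
    integral_mul_continuousLinearMap_eq_zero hcoord hg1, mul_zero, mul_zero, zero_add, zero_add,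
    ← integral_const_mul, ← Real.norm_eq_abs]
  exact norm_integral_le_of_norm_le (hmom.const_mul _) (ae_of_all _ hR)

end Moments

theorem integrable_and_integral_comp_smul_sub {E : Type*} [NormedAddCommGroup E]
    [NormedSpace ℝ E] [MeasurableSpace E] [BorelSpace E] [FiniteDimensional ℝ E] {μ : Measure E}
    [μ.IsAddHaarMeasure] {G : E → ℝ} (hG : Integrable G μ) {a : ℝ} (ha : 0 < a) (b : E) :
    Integrable (fun x => G (a • (x - b))) μ ∧
      ∫ x, G (a • (x - b)) ∂μ = (a ^ Module.finrank ℝ E)⁻¹ * ∫ x, G x ∂μ :=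
  ⟨(hG.comp_smul ha.ne').comp_sub_right b, by
    rw [integral_sub_right_eq_self (fun x => G (a • x)), Measure.integral_comp_smul,
      abs_of_pos (inv_pos.2 (pow_pos ha _)), smul_eq_mul]⟩

theorem rpow_mul_inv_pow_mul_inv_sq {x : ℝ} (hx : 0 < x) (k : ℝ) {d : ℕ} (hd : d ≠ 0) :
    x ^ (k / 2) * ((x ^ (k / d)) ^ d)⁻¹ * (x ^ (k / d))⁻¹ ^ 2 = x ^ (-(2 * k / d + k / 2)) := by
  rw [← Real.rpow_natCast, ← Real.rpow_mul hx.le, ← Real.rpow_neg hx.le, ← Real.rpow_neg hx.le,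
    ← Real.rpow_natCast, ← Real.rpow_mul hx.le, ← Real.rpow_add hx, ← Real.rpow_add hx]
  congr 1
  field_simp
  ring

theorem statement9 (d : ℕ) (hd : 1 ≤ d)
    (g : EuclideanSpace ℝ (Fin d) → ℝ) (hgm : Measurable g)
    (hgint : Integrable (fun y : EuclideanSpace ℝ (Fin d) => (1 + ‖y‖ ^ 2) * |g y|))
    (hg0 : ∫ y : EuclideanSpace ℝ (Fin d), g y = 0)
    (hg1 : ∀ j : Fin d, ∫ y : EuclideanSpace ℝ (Fin d), y j * g y = 0)
    (M : ℝ) (hM : M = ∫ y : EuclideanSpace ℝ (Fin d), ‖y‖ ^ 2 * |g y|)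
    (f : EuclideanSpace ℝ (Fin d) → ℝ) (hf : ContDiff ℝ 2 f)
    (H : ℝ) (hH : ∀ x, ‖iteratedFDeriv ℝ 2 f x‖ ≤ H)
    (k : ℤ) (b : EuclideanSpace ℝ (Fin d)) :
    Integrable (fun x : EuclideanSpace ℝ (Fin d) =>
      (2 : ℝ) ^ ((k : ℝ) / 2) * g (((2 : ℝ) ^ ((k : ℝ) / d)) • (x - b)) * f x) ∧
    |∫ x : EuclideanSpace ℝ (Fin d),
        (2 : ℝ) ^ ((k : ℝ) / 2) * g (((2 : ℝ) ^ ((k : ℝ) / d)) • (x - b)) * f x| ≤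
      (1 / 2) * H * M * (2 : ℝ) ^ (-(2 * (k : ℝ) / d + (k : ℝ) / 2)) := by
  set a : ℝ := 2 ^ ((k : ℝ) / d)
  have ha : 0 < a := by positivity
  obtain ⟨hGI, hGle⟩ :=
    integrable_and_abs_integral_mul_comp_affine_le hgm hgint hg0 hg1 hf hH b a⁻¹
  obtain ⟨hI, hIeq⟩ := integrable_and_integral_comp_smul_sub hGI ha b
  have hrescale : (fun x => (2 : ℝ) ^ ((k : ℝ) / 2) * g (a • (x - b)) * f x)
      = fun x => (2 : ℝ) ^ ((k : ℝ) / 2) * (g (a • (x - b)) * f (b + a⁻¹ • a • (x - b))) := by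
    simp only [inv_smul_smul₀ ha.ne', add_sub_cancel, mul_assoc]
  rw [hrescale, integral_const_mul, hIeq, finrank_euclideanSpace_fin]
  rw [← hM] at hGle
  refine ⟨hI.const_mul _, ?_⟩
  calc |(2 : ℝ) ^ ((k : ℝ) / 2) * ((a ^ d)⁻¹ * ∫ u, g u * f (b + a⁻¹ • u))|
      = (2 : ℝ) ^ ((k : ℝ) / 2) * (a ^ d)⁻¹ * |∫ u, g u * f (b + a⁻¹ • u)| := by
        rw [abs_mul, abs_mul, abs_of_pos (by positivity), abs_of_pos (by positivity), mul_assoc]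
    _ ≤ (2 : ℝ) ^ ((k : ℝ) / 2) * (a ^ d)⁻¹ * (H / 2 * a⁻¹ ^ 2 * M) := by gcongr
    _ = 1 / 2 * H * M * (2 : ℝ) ^ (-(2 * (k : ℝ) / d + (k : ℝ) / 2)) := by
        rw [← rpow_mul_inv_pow_mul_inv_sq two_pos k (by omega : d ≠ 0)]
        ring
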